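/- The function Q is strictly increasing on [0, ∞), satisfies Q(0) = (ℓ₁/ℓ₂)·Ste₁/√π, and Q(z) tends to +∞ as z → +∞. -/

import Mathlib

noncomputable section

/-- The error function `erf x = (2/√π) ∫₀ˣ exp(−s²) ds`. -/
def erf (x : ℝ) : ℝ := (2 / Real.sqrt Real.pi) * ∫ s in (0:ℝ)..x, Real.exp (-(s^2))

/-- The complementary error function. -/
def erfc (x : ℝ) : ℝ := 1 - erf x

/-- Physical data of the three-phase Stefan problem: positive thermal conductivities,
specific heats, mass density, latent heats, and temperatures `B > C > D`. -/
structure Params where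
  k₁ : ℝ
  k₂ : ℝ
  k₃ : ℝ
  c₁ : ℝ
  c₂ : ℝ
  c₃ : ℝ
  ρ : ℝ
  ℓ₁ : ℝ
  ℓ₂ : ℝ
  B : ℝ
  C : ℝ
  D : ℝ
  hk₁ : 0 < k₁
  hk₂ : 0 < k₂
  hk₃ : 0 < k₃
  hc₁ : 0 < c₁
  hc₂ : 0 < c₂
  hc₃ : 0 < c₃
  hρ : 0 < ρ
  hℓ₁ : 0 < ℓ₁
  hℓ₂ : 0 < ℓ₂
  hBC : C < B
  hCD : D < C

namespace Params

/-- Thermal diffusivity of phase 1. -/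
def α₁ (p : Params) : ℝ := p.k₁ / (p.ρ * p.c₁)

/-- Thermal diffusivity of phase 2. -/
def α₂ (p : Params) : ℝ := p.k₂ / (p.ρ * p.c₂)

/-- Thermal diffusivity of phase 3. -/
def α₃ (p : Params) : ℝ := p.k₃ / (p.ρ * p.c₃)

/-- Stefan number `Ste₁ = c₁(C−D)/ℓ₁`. -/
def Ste₁ (p : Params) : ℝ := p.c₁ * (p.C - p.D) / p.ℓ₁

/-- Stefan number `Ste₂ = c₂(B−C)/ℓ₂`. -/
def Ste₂ (p : Params) : ℝ := p.c₂ * (p.B - p.C) / p.ℓ₂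

/-- `φ(z) = z + (Ste₁/√π) exp(−z²)/erfc(z)`. -/
def φ (p : Params) (z : ℝ) : ℝ :=
  z + (p.Ste₁ / Real.sqrt Real.pi) * Real.exp (-(z^2)) / erfc z

/-- `H(z) = erf(z√(α₁/α₂)) − (Ste₂/√π)(ℓ₂/ℓ₁)√(k₂c₁/(k₁c₂)) exp(−z²α₁/α₂)/φ(z)`. -/
def H (p : Params) (z : ℝ) : ℝ :=
  erf (z * Real.sqrt (p.α₁ / p.α₂)) -
    (p.Ste₂ / Real.sqrt Real.pi) * (p.ℓ₂ / p.ℓ₁) *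
      Real.sqrt (p.k₂ * p.c₁ / (p.k₁ * p.c₂)) *
      (Real.exp (-(z^2) * (p.α₁ / p.α₂)) / p.φ z)

/-- `Q(z) = (ℓ₁/ℓ₂) φ(z) exp(z² α₁/α₂)`. -/
def Q (p : Params) (z : ℝ) : ℝ :=
  (p.ℓ₁ / p.ℓ₂) * p.φ z * Real.exp (z^2 * (p.α₁ / p.α₂))

/-- The function `T` arising from the Robin (convective) boundary condition with
heat-transfer coefficient `h₀` and bulk temperature `Ainf`. -/
def T (p : Params) (h₀ Ainf : ℝ) (z : ℝ) : ℝ :=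
  (p.Ste₂ / (Real.sqrt Real.pi * p.c₂)) * ((Ainf - p.B) / (p.B - p.C)) *
    Real.sqrt (p.k₃ * p.c₁ * p.c₃ / p.k₁) *
    (Real.exp (-(z^2) * p.α₁ * (1 / p.α₃ - 1 / p.α₂)) /
      (p.k₃ / (h₀ * Real.sqrt (Real.pi * p.α₃)) + erf (z * Real.sqrt (p.α₁ / p.α₃)))) -
  z * Real.exp (z^2 * (p.α₁ / p.α₂))

/-- The function `V` arising from the Dirichlet boundary condition with temperature `A`. -/
def V (p : Params) (A : ℝ) (z : ℝ) : ℝ :=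
  ((A - p.B) / p.ℓ₂) * Real.sqrt (p.c₁ * p.c₃ * p.k₃ / (Real.pi * p.k₁)) *
    (Real.exp (-(z^2) * (p.α₁ / p.α₃ - p.α₁ / p.α₂)) / erf (z * Real.sqrt (p.α₁ / p.α₃))) -
  z * Real.exp (z^2 * (p.α₁ / p.α₂))

/-- The function `P` arising from the Neumann boundary condition with flux coefficient `q₀`. -/
def P (p : Params) (q₀ : ℝ) (z : ℝ) : ℝ :=
  Real.exp (z^2 * (p.α₁ / p.α₂)) *
    (-z + (q₀ / p.ℓ₂) * Real.sqrt (p.c₁ / (p.ρ * p.k₁)) * Real.exp (-(z^2) * (p.α₁ / p.α₃)))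

/-- Critical heat-transfer coefficient `h₂`. -/
def h2 (p : Params) (Ainf z₀ : ℝ) : ℝ :=
  ((p.B - p.C) / (Ainf - p.B)) *
    Real.sqrt (p.k₂ * p.k₃ * p.c₂ / (Real.pi * p.c₃ * p.α₃)) *
    (1 / erf (z₀ * Real.sqrt (p.α₁ / p.α₂)))

/-- Critical heat-flux coefficient `q₂`. -/
def q2 (p : Params) (z₀ : ℝ) : ℝ :=
  p.k₂ * (p.B - p.C) / (Real.sqrt (p.α₂ * Real.pi) * erf (z₀ * Real.sqrt (p.α₁ / p.α₂)))

end Params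

/-!
Substituting `s = t + z` in `erfc z = (2/√π) ∫_z^∞ e^{-s²} ds` gives
`e^{z²} erfc z = (2/√π) ∫_0^∞ e^{-t² - 2zt} dt`, which is positive and strictly decreasing in `z`.
Hence `φ z = z + (Ste₁/√π) / (e^{z²} erfc z)` is strictly increasing with `φ z > z`, so on
`[0, ∞)` the function `Q` is a product of positive strictly increasing factors, and it tends to
infinity together with `φ`.
-/

open MeasureTheory Set Filter Real

theorem setIntegral_lt_setIntegral {X : Type*} [MeasurableSpace X] {μ : Measure X} {s : Set X}
    {f g : X → ℝ} (hs : MeasurableSet s) (hμs : μ s ≠ 0) (hf : IntegrableOn f s μ)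
    (hg : IntegrableOn g s μ) (hfg : ∀ x ∈ s, f x < g x) :
    ∫ x in s, f x ∂μ < ∫ x in s, g x ∂μ := by
  have hpos : 0 < ∫ x in s, (g x - f x) ∂μ := by
    rw [setIntegral_pos_iff_support_of_nonneg_ae (f := fun x => g x - f x) _ (hg.sub hf)]
    · have hsupp : Function.support (fun x => g x - f x) ∩ s = s :=
        inter_eq_right.2 fun x hx => sub_ne_zero.2 (hfg x hx).ne'
      rw [hsupp]
      exact pos_iff_ne_zero.2 hμs
    · exact (ae_restrict_iff' hs).2 (ae_of_all _ fun x hx => sub_nonneg.2 (hfg x hx).le)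
  rwa [integral_sub hg hf, sub_pos] at hpos

theorem integral_Ioi_eq_integral_Ioi_zero_add {E : Type*} [NormedAddCommGroup E]
    [NormedSpace ℝ E] (f : ℝ → E) (a : ℝ) :
    ∫ x in Ioi a, f x = ∫ t in Ioi 0, f (t + a) := by
  have hpre : (fun t : ℝ => t + a) ⁻¹' Ioi a = Ioi 0 := by ext t; simp
  rw [← hpre, (measurePreserving_add_right volume a).setIntegral_preimage_emb
    (measurableEmbedding_addRight a)]

theorem integrable_exp_neg_sq : Integrable fun s : ℝ => exp (-s ^ 2) := by
  simpa using integrable_exp_neg_mul_sq one_pos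

theorem erfc_eq_integral_Ioi (x : ℝ) : erfc x = 2 / √π * ∫ s in Ioi x, exp (-s ^ 2) := by
  have hsplit := intervalIntegral.integral_Ioi_sub_Ioi' (a := 0) (b := x)
    integrable_exp_neg_sq.integrableOn integrable_exp_neg_sq.integrableOn
  have htotal : ∫ s in Ioi (0 : ℝ), exp (-s ^ 2) = √π / 2 := by
    simpa using integral_gaussian_Ioi 1
  rw [erfc, erf, ← hsplit, htotal]
  field_simp
  ring

theorem erfc_zero : erfc 0 = 1 := by simp [erfc, erf]

def erfcx (x : ℝ) : ℝ := exp (x ^ 2) * erfc x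

theorem erfcx_eq_integral_Ioi (x : ℝ) :
    erfcx x = 2 / √π * ∫ t in Ioi 0, exp (-t ^ 2 - 2 * x * t) := by
  have hexp : ∀ t, exp (x ^ 2) * exp (-(t + x) ^ 2) = exp (-t ^ 2 - 2 * x * t) := fun t => by
    rw [← exp_add]; ring_nf
  rw [erfcx, erfc_eq_integral_Ioi, integral_Ioi_eq_integral_Ioi_zero_add, mul_left_comm,
    ← integral_const_mul]
  simp only [hexp]

theorem integrable_exp_neg_sq_sub_mul (x : ℝ) :
    Integrable fun t : ℝ => exp (-t ^ 2 - 2 * x * t) := by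
  have h := (integrable_exp_neg_sq.comp_add_right x).const_mul (exp (x ^ 2))
  refine h.congr (ae_of_all _ fun t => ?_)
  simp only [← exp_add]; ring_nf

theorem erfcx_pos (x : ℝ) : 0 < erfcx x := by
  have h : 0 < ∫ t in Ioi (0 : ℝ), exp (-t ^ 2 - 2 * x * t) := by
    simpa using setIntegral_lt_setIntegral (f := 0) measurableSet_Ioi (by simp) integrableOn_zero
      (integrable_exp_neg_sq_sub_mul x).integrableOn fun t _ => exp_pos (-t ^ 2 - 2 * x * t)
  rw [erfcx_eq_integral_Ioi]
  positivity

theorem erfcx_strictAnti : StrictAnti erfcx := by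
  intro x y hxy
  rw [erfcx_eq_integral_Ioi, erfcx_eq_integral_Ioi]
  refine mul_lt_mul_of_pos_left (setIntegral_lt_setIntegral measurableSet_Ioi (by simp)
    (integrable_exp_neg_sq_sub_mul y).integrableOn (integrable_exp_neg_sq_sub_mul x).integrableOn
    fun t ht => exp_lt_exp.2 ?_) (by positivity)
  nlinarith [mem_Ioi.1 ht]

namespace Params

variable (p : Params)

theorem Ste₁_pos : 0 < p.Ste₁ := div_pos (mul_pos p.hc₁ (sub_pos.2 p.hCD)) p.hℓ₁

theorem α₁_div_α₂_pos : 0 < p.α₁ / p.α₂ :=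
  div_pos (div_pos p.hk₁ (mul_pos p.hρ p.hc₁)) (div_pos p.hk₂ (mul_pos p.hρ p.hc₂))

theorem ℓ₁_div_ℓ₂_pos : 0 < p.ℓ₁ / p.ℓ₂ := div_pos p.hℓ₁ p.hℓ₂

theorem φ_eq_add_div_erfcx (z : ℝ) : p.φ z = z + p.Ste₁ / √π / erfcx z := by
  rw [φ, erfcx, exp_neg]
  ring

theorem lt_φ (z : ℝ) : z < p.φ z := by
  rw [φ_eq_add_div_erfcx]
  exact lt_add_of_pos_right z (div_pos (div_pos p.Ste₁_pos (by positivity)) (erfcx_pos z))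

theorem φ_strictMono : StrictMono p.φ := by
  intro x y hxy
  rw [φ_eq_add_div_erfcx, φ_eq_add_div_erfcx]
  have hc : 0 < p.Ste₁ / √π := div_pos p.Ste₁_pos (by positivity)
  have := div_lt_div_of_pos_left hc (erfcx_pos y) (erfcx_strictAnti hxy)
  linarith

theorem Q_strictMonoOn : StrictMonoOn p.Q (Ici 0) := by
  intro x hx y hy hxy
  have hφ : p.ℓ₁ / p.ℓ₂ * p.φ x < p.ℓ₁ / p.ℓ₂ * p.φ y :=
    mul_lt_mul_of_pos_left (p.φ_strictMono hxy) p.ℓ₁_div_ℓ₂_pos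
  have hexp : exp (x ^ 2 * (p.α₁ / p.α₂)) < exp (y ^ 2 * (p.α₁ / p.α₂)) :=
    exp_lt_exp.2 (mul_lt_mul_of_pos_right (pow_lt_pow_left₀ hxy hx two_ne_zero)
      p.α₁_div_α₂_pos)
  exact mul_lt_mul'' hφ hexp (mul_pos p.ℓ₁_div_ℓ₂_pos (lt_of_le_of_lt hx (p.lt_φ x))).le (exp_pos _).le

theorem Q_zero : p.Q 0 = p.ℓ₁ / p.ℓ₂ * p.Ste₁ / √π := by
  simp only [Q, φ, erfc_zero, zero_pow two_ne_zero, zero_mul, neg_zero, exp_zero, div_one,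
    zero_add, mul_one]
  ring

theorem tendsto_Q_atTop : Tendsto p.Q atTop atTop := by
  have hφ : Tendsto p.φ atTop atTop := tendsto_atTop_mono (fun z => (p.lt_φ z).le) tendsto_id
  have hexp : Tendsto (fun z : ℝ => exp (z ^ 2 * (p.α₁ / p.α₂))) atTop atTop :=
    tendsto_exp_atTop.comp ((tendsto_pow_atTop two_ne_zero).atTop_mul_const p.α₁_div_α₂_pos)
  exact (hφ.const_mul_atTop p.ℓ₁_div_ℓ₂_pos).atTop_mul_atTop₀ hexp

end Params

/-- `Q` is strictly increasing on `[0, ∞)`, `Q(0) = (ℓ₁/ℓ₂)Ste₁/√π`,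
and `Q(z) → +∞` as `z → +∞`. -/
theorem Q_properties (p : Params) :
    (∀ z z' : ℝ, 0 ≤ z → z < z' → p.Q z < p.Q z') ∧
    p.Q 0 = (p.ℓ₁ / p.ℓ₂) * p.Ste₁ / Real.sqrt Real.pi ∧
    Filter.Tendsto p.Q Filter.atTop Filter.atTop :=
  ⟨fun _ _ hz hzz' => p.Q_strictMonoOn hz (hz.trans hzz'.le) hzz', p.Q_zero, p.tendsto_Q_atTop⟩
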